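/- arXiv:2408.06638 — 2 statements merged into one kernel-verified Lean document; each statement's English description precedes it below -/
import Mathlib

section
/- Fix n, c ∈ ℕ and λ > 0. Let ℓ_s, ℓ_t : Fin n → Fin c be source and target label assignments such that for every label p, the class sizes agree: n_p := #{i : ℓ_s(i) = p} = #{i : ℓ_t(i) = p}. Let K_Y^{ss}, K_Y^{tt} be the delta-kernel Gram matrices of ℓ_s and ℓ_t respectively (entry (i,j) equals 1 if the two labels agree, else 0), and let K_Y^{ts} be the n×n matrix with (K_Y^{ts})_{ij} = 1 if ℓ_t(i) = ℓ_s(j) and 0 otherwise. Then for arbitrary real n×n matrices K_X^{ss}, K_X^{tt}, K_X^{st}: tr(K_Y^{ss}(K_Y^{ss}+λI)^{-1} K_X^{ss} (K_Y^{ss}+λI)^{-1}) + tr(K_Y^{tt}(K_Y^{tt}+λI)^{-1} K_X^{tt} (K_Y^{tt}+λI)^{-1}) − 2·tr(K_Y^{ts}(K_Y^{ss}+λI)^{-1} K_X^{st} (K_Y^{tt}+λI)^{-1}) = Σ_{p=1}^{c} (λ + n_p)^{-2} · [ Σ_{i,j : ℓ_s(i)=ℓ_s(j)=p} (K_X^{ss})_{ij}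 + Σ_{i,j : ℓ_t(i)=ℓ_t(j)=p} (K_X^{tt})_{ij} − 2·Σ_{i,j : ℓ_s(i)=p, ℓ_t(j)=p} (K_X^{st})_{ij} ]. -/
/-!
The delta-kernel Gram matrices factor through the one-hot encoding `E` of the labels:
`K_Y = E Eᵀ` and `Eᵀ E = diag(n_p)`. Hence `Eᵀ (E Eᵀ + λ I) = diag(λ + n_p) Eᵀ`, so `Eᵀ` can be
pushed through the regularized inverse: `Eᵀ (K_Y + λ I)⁻¹ = diag((λ + n_p)⁻¹) Eᵀ`. By cyclicity of
the trace every term collapses to `∑_p (λ + n_p)⁻² (Eᵀ K_X E)_{pp}`, and `(Eᵀ K_X E)_{pp}` is the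
within-class kernel sum. `K_Y + λ I` is invertible, being positive definite for `λ > 0`.
-/

open Matrix Finset

variable {ι κ : Type*} (R : Type*) [DecidableEq κ]

def Matrix.oneHot [Zero R] [One R] (α : ι → κ) : Matrix ι κ R :=
  of fun i p => if α i = p then 1 else 0

namespace Matrix

@[simp]
theorem oneHot_apply [Zero R] [One R] (α : ι → κ) (i : ι) (p : κ) :
    oneHot R α i p = if α i = p then 1 else 0 := rfl

section Semiring

variable [NonAssocSemiring R]

theorem oneHot_mul_transpose_oneHot_apply [Fintype κ] (α β : ι → κ) (i j : ι) :
    (oneHot R α * (oneHot R β)ᵀ) i j = if α i = β j then 1 else 0 := by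
  simp [mul_apply, eq_comm]

variable [Fintype ι]

theorem transpose_oneHot_mul_oneHot (α : ι → κ) :
    (oneHot R α)ᵀ * oneHot R α = diagonal fun p => (#{i | α i = p} : R) := by
  ext p q
  by_cases hpq : p = q
  · subst hpq
    simp [mul_apply, ← ite_and]
  · rw [diagonal_apply_ne _ hpq, mul_apply]
    refine sum_eq_zero fun j _ => ?_
    simp only [transpose_apply, oneHot_apply]
    split_ifs <;> simp_all

theorem transpose_oneHot_mul_mul_oneHot_apply_self (α β : ι → κ) (X : Matrix ι ι R) (p : κ) :
    ((oneHot R α)ᵀ * X * oneHot R β) p p = ∑ i with α i = p, ∑ j with β j = p, X i j := by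
  simp only [mul_apply, transpose_apply, oneHot_apply, ite_mul, mul_ite, one_mul, mul_one,
    zero_mul, mul_zero, ← sum_filter]
  exact sum_comm

end Semiring

section Field

variable {R} [Field R] [Fintype ι] [Fintype κ] [DecidableEq ι] {lam : R}

theorem transpose_oneHot_mul_oneHot_mul_transpose_add_smul_one (α : ι → κ) :
    (oneHot R α)ᵀ * (oneHot R α * (oneHot R α)ᵀ + lam • 1)
      = diagonal (fun p => lam + #{i | α i = p}) * (oneHot R α)ᵀ := by
  rw [Matrix.mul_add, ← Matrix.mul_assoc, transpose_oneHot_mul_oneHot, Matrix.mul_smul,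
    Matrix.mul_one]
  ext p i
  by_cases h : α i = p <;> simp [diagonal_mul, h, add_comm]

theorem transpose_oneHot_mul_inv (α : ι → κ)
    (hG : IsUnit (oneHot R α * (oneHot R α)ᵀ + lam • 1))
    (hreg : ∀ p, lam + #{i | α i = p} ≠ 0) :
    (oneHot R α)ᵀ * (oneHot R α * (oneHot R α)ᵀ + lam • 1)⁻¹
      = diagonal (fun p => (lam + #{i | α i = p})⁻¹) * (oneHot R α)ᵀ := by
  have hdet := (isUnit_iff_isUnit_det _).mp hG
  calc (oneHot R α)ᵀ * (oneHot R α * (oneHot R α)ᵀ + lam • 1)⁻¹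
      = diagonal (fun p => (lam + #{i | α i = p})⁻¹) * diagonal (fun p => lam + #{i | α i = p})
          * (oneHot R α)ᵀ * (oneHot R α * (oneHot R α)ᵀ + lam • 1)⁻¹ := by
        rw [diagonal_mul_diagonal]
        simp [inv_mul_cancel₀ (hreg _)]
    _ = diagonal (fun p => (lam + #{i | α i = p})⁻¹) * (oneHot R α)ᵀ := by
        rw [Matrix.mul_assoc _ (diagonal _),
          ← transpose_oneHot_mul_oneHot_mul_transpose_add_smul_one, ← Matrix.mul_assoc,
          mul_nonsing_inv_cancel_right _ _ hdet]

theorem inv_mul_oneHot (α : ι → κ)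
    (hG : IsUnit (oneHot R α * (oneHot R α)ᵀ + lam • 1))
    (hreg : ∀ p, lam + #{i | α i = p} ≠ 0) :
    (oneHot R α * (oneHot R α)ᵀ + lam • 1)⁻¹ * oneHot R α
      = oneHot R α * diagonal (fun p => (lam + #{i | α i = p})⁻¹) := by
  apply transpose_injective
  have hsymm : (oneHot R α * (oneHot R α)ᵀ + lam • 1)ᵀ = oneHot R α * (oneHot R α)ᵀ + lam • 1 := by
    simp
  rw [transpose_mul, transpose_nonsing_inv, hsymm, transpose_oneHot_mul_inv α hG hreg,
    transpose_mul, diagonal_transpose]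

theorem trace_oneHot_mul_transpose_mul_inv_mul_mul_inv (α β : ι → κ) (X : Matrix ι ι R)
    (hGα : IsUnit (oneHot R α * (oneHot R α)ᵀ + lam • 1))
    (hGβ : IsUnit (oneHot R β * (oneHot R β)ᵀ + lam • 1))
    (hα : ∀ p, lam + #{i | α i = p} ≠ 0) (hβ : ∀ p, lam + #{i | β i = p} ≠ 0) :
    (oneHot R β * (oneHot R α)ᵀ * (oneHot R α * (oneHot R α)ᵀ + lam • 1)⁻¹ * X *
        (oneHot R β * (oneHot R β)ᵀ + lam • 1)⁻¹).trace
      = ∑ p, (lam + #{i | α i = p})⁻¹ * (lam + #{i | β i = p})⁻¹ *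
          ∑ i with α i = p, ∑ j with β j = p, X i j := by
  rw [Matrix.mul_assoc (oneHot R β), transpose_oneHot_mul_inv α hGα hα, trace_mul_comm,
    ← Matrix.mul_assoc, ← Matrix.mul_assoc, inv_mul_oneHot β hGβ hβ, Matrix.mul_assoc,
    Matrix.mul_assoc, trace_mul_comm]
  simp only [trace, diag, Matrix.mul_assoc, diagonal_mul]
  refine sum_congr rfl fun p _ => ?_
  rw [← Matrix.mul_assoc, transpose_oneHot_mul_mul_oneHot_apply_self]
  ring

end Field

theorem isUnit_oneHot_mul_transpose_add_smul_one [Fintype ι] [Fintype κ] [DecidableEq ι]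
    (α : ι → κ) {lam : ℝ} (hlam : 0 < lam) :
    IsUnit (oneHot ℝ α * (oneHot ℝ α)ᵀ + lam • 1) := by
  rw [← conjTranspose_eq_transpose_of_trivial]
  exact (PosDef.posSemidef_add (posSemidef_self_mul_conjTranspose _) (PosDef.one.smul hlam)).isUnit

end Matrix

/-- **Closed form of the empirical conditional MMD with the Kronecker delta label kernel
(Proposition 3).** Let `ℓs, ℓt : Fin n → Fin c` be source and target label assignments with
equal class sizes `n_p`, let `Kss, Ktt` be the delta-kernel Gram matrices of `ℓs` and `ℓt`,
and let `Kts i j = 1` iff `ℓt i = ℓs j`. Then for arbitrary feature kernel matrices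
`KXss, KXtt, KXst`, the regularized conditional MMD trace expression equals the class-wise
weighted sum of within-class kernel sums. -/
theorem empirical_cmmd_delta_kernel
    (n c : ℕ) (lam : ℝ) (hlam : 0 < lam) (ℓs ℓt : Fin n → Fin c)
    (hcard : ∀ p : Fin c,
      (univ.filter fun i => ℓs i = p).card = (univ.filter fun i => ℓt i = p).card)
    (Kss Ktt Kts : Matrix (Fin n) (Fin n) ℝ)
    (hKss : ∀ i j, Kss i j = if ℓs i = ℓs j then 1 else 0)
    (hKtt : ∀ i j, Ktt i j = if ℓt i = ℓt j then 1 else 0)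
    (hKts : ∀ i j, Kts i j = if ℓt i = ℓs j then 1 else 0)
    (KXss KXtt KXst : Matrix (Fin n) (Fin n) ℝ) :
    (Kss * (Kss + lam • (1 : Matrix (Fin n) (Fin n) ℝ))⁻¹ * KXss *
        (Kss + lam • (1 : Matrix (Fin n) (Fin n) ℝ))⁻¹).trace
      + (Ktt * (Ktt + lam • (1 : Matrix (Fin n) (Fin n) ℝ))⁻¹ * KXtt *
        (Ktt + lam • (1 : Matrix (Fin n) (Fin n) ℝ))⁻¹).trace
      - 2 * (Kts * (Kss + lam • (1 : Matrix (Fin n) (Fin n) ℝ))⁻¹ * KXst *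
        (Ktt + lam • (1 : Matrix (Fin n) (Fin n) ℝ))⁻¹).trace
    = ∑ p : Fin c, ((lam + ((univ.filter fun i => ℓs i = p).card : ℝ)) ^ 2)⁻¹ *
        ((∑ i ∈ univ.filter fun i => ℓs i = p, ∑ j ∈ univ.filter fun j => ℓs j = p, KXss i j)
          + (∑ i ∈ univ.filter fun i => ℓt i = p, ∑ j ∈ univ.filter fun j => ℓt j = p, KXtt i j)
          - 2 * ∑ i ∈ univ.filter fun i => ℓs i = p, ∑ j ∈ univ.filter fun j => ℓt j = p,
              KXst i j) := by
  have hKss' : Kss = oneHot ℝ ℓs * (oneHot ℝ ℓs)ᵀ :=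
    ext fun i j => by rw [hKss, oneHot_mul_transpose_oneHot_apply]
  have hKtt' : Ktt = oneHot ℝ ℓt * (oneHot ℝ ℓt)ᵀ :=
    ext fun i j => by rw [hKtt, oneHot_mul_transpose_oneHot_apply]
  have hKts' : Kts = oneHot ℝ ℓt * (oneHot ℝ ℓs)ᵀ :=
    ext fun i j => by rw [hKts, oneHot_mul_transpose_oneHot_apply]
  have hGs := isUnit_oneHot_mul_transpose_add_smul_one ℓs hlam
  have hGt := isUnit_oneHot_mul_transpose_add_smul_one ℓt hlam
  have hreg (α : Fin n → Fin c) (p : Fin c) : lam + (#{i | α i = p} : ℝ) ≠ 0 := by positivity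
  rw [hKss', hKtt', hKts',
    trace_oneHot_mul_transpose_mul_inv_mul_mul_inv _ _ _ hGs hGs (hreg ℓs) (hreg ℓs),
    trace_oneHot_mul_transpose_mul_inv_mul_mul_inv _ _ _ hGt hGt (hreg ℓt) (hreg ℓt),
    trace_oneHot_mul_transpose_mul_inv_mul_mul_inv _ _ _ hGs hGt (hreg ℓs) (hreg ℓt)]
  simp only [← hcard]
  rw [mul_sum, ← sum_add_distrib, ← sum_sub_distrib]
  refine sum_congr rfl fun p _ => ?_
  rw [← inv_pow]
  ring
end

section
/- Let A and B be real symmetric positive semidefinite n×n matrices. Then tr(A) + tr(B) − 2·tr((√A · B · √A)^{1/2}) = 0 if and only if A = B; that is, the Bures distance between positive semidefinite matrices vanishes exactly when the matrices coincide (identity of indiscernibles). -/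
open Matrix

/-- The unique positive semidefinite square root of a positive semidefinite real matrix
(junk value `0` if the matrix is not positive semidefinite; it is only ever applied to
positive semidefinite matrices below). -/
noncomputable def psdSqrt {n : ℕ} (M : Matrix (Fin n) (Fin n) ℝ) :
    Matrix (Fin n) (Fin n) ℝ := by
  classical exact if h : M.PosSemidef then
    (h.1.eigenvectorUnitary.1 * diagonal ((↑) ∘ Real.sqrt ∘ h.1.eigenvalues) *
      (star h.1.eigenvectorUnitary : Matrix (Fin n) (Fin n) ℝ)) else 0

namespace Matrix.PosSemidef

noncomputable def sqrt {n : ℕ} {M : Matrix (Fin n) (Fin n) ℝ} (h : M.PosSemidef) :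
    Matrix (Fin n) (Fin n) ℝ :=
  h.1.eigenvectorUnitary.1 * diagonal ((↑) ∘ Real.sqrt ∘ h.1.eigenvalues) *
      (star h.1.eigenvectorUnitary : Matrix (Fin n) (Fin n) ℝ)

open scoped MatrixOrder in
lemma sqrt_eq_cfc {n : ℕ} {M : Matrix (Fin n) (Fin n) ℝ} (h : M.PosSemidef) :
    h.sqrt = CFC.sqrt M := by
  rw [CFC.sqrt_eq_cfc, cfc_nnreal_eq_real _ M, h.1.cfc_eq]
  simp only [IsHermitian.cfc, sqrt, Real.coe_sqrt, Real.coe_toNNReal']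
  rw [Unitary.conjStarAlgAut_apply]
  congr 3
  funext i
  simp [max_eq_left (h.eigenvalues_nonneg i)]

open scoped MatrixOrder in
lemma posSemidef_sqrt {n : ℕ} {M : Matrix (Fin n) (Fin n) ℝ} (h : M.PosSemidef) :
    h.sqrt.PosSemidef := by
  rw [sqrt_eq_cfc]; exact (CFC.sqrt_nonneg M).posSemidef

open scoped MatrixOrder in
lemma sqrt_mul_self {n : ℕ} {M : Matrix (Fin n) (Fin n) ℝ} (h : M.PosSemidef) :
    h.sqrt * h.sqrt = M := by
  rw [sqrt_eq_cfc]; exact CFC.sqrt_mul_sqrt_self M h.nonneg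

open scoped MatrixOrder in
lemma eq_sqrt_of_sq_eq {n : ℕ} {A B : Matrix (Fin n) (Fin n) ℝ} (hA : A.PosSemidef)
    (hB : B.PosSemidef) (hAB : A ^ 2 = B) : A = hB.sqrt := by
  rw [sqrt_eq_cfc]; exact (CFC.sqrt_unique (by rw [← pow_two, hAB]) hA.nonneg).symm

end Matrix.PosSemidef

lemma psdSqrt_eq {n : ℕ} {M : Matrix (Fin n) (Fin n) ℝ} (h : M.PosSemidef) :
    psdSqrt M = h.sqrt := by
  unfold psdSqrt
  rw [dif_pos h]
  rfl

lemma trace_ct_mul_self {n : ℕ} (X : Matrix (Fin n) (Fin n) ℝ) :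
    (Xᴴ * X).trace = ∑ j, ∑ i, X i j * X i j := by
  simp [Matrix.trace, Matrix.mul_apply, Matrix.conjTranspose_apply, Matrix.diag]

lemma trace_ct_mul_self_nonneg {n : ℕ} (X : Matrix (Fin n) (Fin n) ℝ) :
    0 ≤ (Xᴴ * X).trace := by
  rw [trace_ct_mul_self]
  exact Finset.sum_nonneg fun j _ => Finset.sum_nonneg fun i _ => mul_self_nonneg _

lemma eq_zero_of_trace_ct_mul_self_eq_zero {n : ℕ} {X : Matrix (Fin n) (Fin n) ℝ}
    (h : (Xᴴ * X).trace = 0) : X = 0 := by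
  rw [trace_ct_mul_self] at h
  have h1 := (Finset.sum_eq_zero_iff_of_nonneg
    (fun j _ => Finset.sum_nonneg fun i _ => mul_self_nonneg (X i j))).mp h
  ext i j
  have h2 := (Finset.sum_eq_zero_iff_of_nonneg
    (fun i (_ : i ∈ Finset.univ) => mul_self_nonneg (X i j))).mp
    (h1 j (Finset.mem_univ j)) i (Finset.mem_univ i)
  simpa using mul_self_eq_zero.mp h2

/-- **Identity of indiscernibles for the Bures distance:** for real symmetric positive
semidefinite matrices `A` and `B`, the squared Bures distance
`tr(A) + tr(B) − 2·tr((√A B √A)^{1/2})` vanishes if and only if `A = B`. -/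
theorem buresDist_sq_eq_zero_iff
    (n : ℕ) (A B : Matrix (Fin n) (Fin n) ℝ)
    (hA : A.PosSemidef) (hB : B.PosSemidef) :
    A.trace + B.trace - 2 * (psdSqrt (psdSqrt A * B * psdSqrt A)).trace = 0 ↔ A = B := by
  classical
  set S := hA.sqrt with hSdef
  set C := hB.sqrt with hCdef
  have hSpsd : S.PosSemidef := hA.posSemidef_sqrt
  have hCpsd : C.PosSemidef := hB.posSemidef_sqrt
  have hS : S * S = A := hA.sqrt_mul_self
  have hC : C * C = B := hB.sqrt_mul_self
  have hSh : Sᴴ = S := hSpsd.isHermitian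
  have hCh : Cᴴ = C := hCpsd.isHermitian
  have hM0 : (S * B * S).PosSemidef := by
    have := hB.conjTranspose_mul_mul_same S
    rwa [hSh] at this
  rw [psdSqrt_eq hA, psdSqrt_eq hM0]
  set T := hM0.sqrt with hTdef
  have hTpsd : T.PosSemidef := hM0.posSemidef_sqrt
  have hTT : T * T = S * B * S := hM0.sqrt_mul_self
  have hTh : T.IsHermitian := hTpsd.isHermitian
  -- spectral data
  set V : Matrix (Fin n) (Fin n) ℝ := (hTh.eigenvectorUnitary : Matrix (Fin n) (Fin n) ℝ)
    with hVdef
  set t : Fin n → ℝ := hTh.eigenvalues with htdef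
  have ht0 : ∀ i, 0 ≤ t i := hTpsd.eigenvalues_nonneg
  have hVV : Vᴴ * V = 1 := by
    rw [← Matrix.star_eq_conjTranspose]
    exact Matrix.mem_unitaryGroup_iff'.mp (hTh.eigenvectorUnitary).2
  have hVV' : V * Vᴴ = 1 := by
    rw [← Matrix.star_eq_conjTranspose]
    exact Matrix.mem_unitaryGroup_iff.mp (hTh.eigenvectorUnitary).2
  have hVTV : Vᴴ * T * V = Matrix.diagonal t := by
    have := Matrix.IsHermitian.conjStarAlgAut_star_eigenvectorUnitary hTh
    simpa [hVdef, htdef, RCLike.ofReal_real_eq_id, Unitary.conjStarAlgAut_apply,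
      Matrix.star_eq_conjTranspose] using this
  have hdiag : Vᴴ * (S * B * S) * V = Matrix.diagonal t * Matrix.diagonal t := by
    calc Vᴴ * (S * B * S) * V = Vᴴ * (T * T) * V := by rw [hTT]
      _ = (Vᴴ * T * V) * (Vᴴ * T * V) := by
          rw [Matrix.mul_assoc (Vᴴ * T) V (Vᴴ * T * V)]
          rw [show V * (Vᴴ * T * V) = V * Vᴴ * T * V by
            simp only [Matrix.mul_assoc]]
          rw [hVV', Matrix.one_mul]
          simp only [Matrix.mul_assoc]
      _ = Matrix.diagonal t * Matrix.diagonal t := by rw [hVTV]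
  set g : Fin n → ℝ := fun i => if t i = 0 then 0 else (t i)⁻¹ with hgdef
  set U : Matrix (Fin n) (Fin n) ℝ := C * S * V * Matrix.diagonal g with hUdef
  set E : Fin n → ℝ := fun i => if t i = 0 then 0 else 1 with hEdef
  have hS' : ∀ Z : Matrix (Fin n) (Fin n) ℝ, S * (S * Z) = A * Z := fun Z => by
    rw [← Matrix.mul_assoc, hS]
  have hC' : ∀ Z : Matrix (Fin n) (Fin n) ℝ, C * (C * Z) = B * Z := fun Z => by
    rw [← Matrix.mul_assoc, hC]
  have hgstar : (Matrix.diagonal g)ᴴ = Matrix.diagonal g := by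
    rw [Matrix.diagonal_conjTranspose]
    congr 1
  have hUh : Uᴴ = Matrix.diagonal g * (Vᴴ * (S * C)) := by
    rw [hUdef]
    simp only [Matrix.conjTranspose_mul, hSh, hCh, hgstar, Matrix.mul_assoc]
  have hUU : Uᴴ * U = Matrix.diagonal E := by
    have h1 : Uᴴ * U
        = Matrix.diagonal g * (Vᴴ * (S * (B * (S * (V * Matrix.diagonal g))))) := by
      rw [hUh, hUdef]
      simp only [Matrix.mul_assoc]
      rw [hC']
    have h2 := congrArg (fun Z => Matrix.diagonal g * Z * Matrix.diagonal g) hdiag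
    simp only [Matrix.mul_assoc] at h2
    rw [h1, h2]
    simp only [Matrix.diagonal_mul_diagonal]
    refine congrArg Matrix.diagonal (funext fun i => ?_)
    show g i * (t i * (t i * g i)) = E i
    by_cases h : t i = 0
    · simp [hgdef, hEdef, h]
    · simp only [hgdef, hEdef, if_neg h]
      field_simp
  set P : Matrix (Fin n) (Fin n) ℝ := U * Uᴴ with hPdef
  have hUE : U * Matrix.diagonal E = U := by
    rw [hUdef, Matrix.mul_assoc (C * S * V) (Matrix.diagonal g) (Matrix.diagonal E),
      Matrix.diagonal_mul_diagonal]
    refine congrArg (fun D : Fin n → ℝ => C * S * V * Matrix.diagonal D)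
      (funext fun i => ?_)
    show g i * E i = g i
    by_cases h : t i = 0
    · simp [hgdef, hEdef, h]
    · simp [hgdef, hEdef, h]
  have hPP : P * P = P := by
    rw [hPdef]
    calc U * Uᴴ * (U * Uᴴ) = U * (Uᴴ * U) * Uᴴ := by simp only [Matrix.mul_assoc]
      _ = U * Matrix.diagonal E * Uᴴ := by rw [hUU]
      _ = U * Uᴴ := by rw [hUE]
  have hPh : Pᴴ = P := by
    rw [hPdef]
    simp [Matrix.conjTranspose_mul]
  have hTrT : T.trace = ∑ i, t i := by
    have h1 : (Vᴴ * T * V).trace = T.trace := by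
      rw [Matrix.trace_mul_cycle, hVV', Matrix.one_mul]
    rw [← h1, hVTV, Matrix.trace_diagonal]
  set X : Matrix (Fin n) (Fin n) ℝ := S * V - C * U with hXdef
  set Y : Matrix (Fin n) (Fin n) ℝ := C - P * C with hYdef
  have hcross : Vᴴ * (S * (C * U))
      = Matrix.diagonal t * (Matrix.diagonal t * Matrix.diagonal g) := by
    have h2 := congrArg (fun Z => Z * Matrix.diagonal g) hdiag
    simp only [Matrix.mul_assoc] at h2
    rw [hUdef]
    simp only [Matrix.mul_assoc]
    rw [hC', h2]
  have htrcross : (Vᴴ * (S * (C * U))).trace = ∑ i, t i := by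
    rw [hcross, Matrix.diagonal_mul_diagonal, Matrix.diagonal_mul_diagonal,
      Matrix.trace_diagonal]
    apply Finset.sum_congr rfl
    intro i _
    show t i * (t i * g i) = t i
    by_cases h : t i = 0
    · simp [hgdef, h]
    · simp only [hgdef, if_neg h]
      field_simp
  have hterm1 : (Vᴴ * (S * (S * V))).trace = A.trace := by
    rw [hS', show Vᴴ * (A * V) = Vᴴ * A * V from (Matrix.mul_assoc _ _ _).symm,
      Matrix.trace_mul_cycle, hVV', Matrix.one_mul]
  have hterm3 : (Uᴴ * (C * (S * V))).trace = ∑ i, t i := by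
    have h1 : (Vᴴ * (S * (C * U)))ᴴ = Uᴴ * (C * (S * V)) := by
      simp only [Matrix.conjTranspose_mul, hSh, hCh, Matrix.conjTranspose_conjTranspose,
        Matrix.mul_assoc]
    calc (Uᴴ * (C * (S * V))).trace = ((Vᴴ * (S * (C * U)))ᴴ).trace := by rw [h1]
      _ = (Vᴴ * (S * (C * U))).trace := by rw [Matrix.trace_conjTranspose, star_trivial]
      _ = ∑ i, t i := htrcross
  have hterm4 : (Uᴴ * (C * (C * U))).trace = (B * P).trace := by
    rw [hC', hPdef,
      show Uᴴ * (B * U) = Uᴴ * B * U from (Matrix.mul_assoc _ _ _).symm,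
      Matrix.trace_mul_cycle, Matrix.trace_mul_comm]
  have hXX : (Xᴴ * X).trace
      = A.trace - (∑ i, t i) - (∑ i, t i) + (B * P).trace := by
    rw [hXdef]
    simp only [Matrix.conjTranspose_sub, Matrix.conjTranspose_mul, hSh, hCh,
      Matrix.sub_mul, Matrix.mul_sub, Matrix.trace_sub, Matrix.mul_assoc]
    rw [hterm1, htrcross, hterm3, hterm4]
    ring
  have hPP' : P * (P * C) = P * C := by rw [← Matrix.mul_assoc, hPP]
  have htr5 : (C * (P * C)).trace = (B * P).trace := by
    rw [Matrix.trace_mul_comm, Matrix.mul_assoc, hC, Matrix.trace_mul_comm]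
  have hYY : (Yᴴ * Y).trace = B.trace - (B * P).trace := by
    rw [hYdef]
    have hPCh : (P * C)ᴴ = C * P := by rw [Matrix.conjTranspose_mul, hCh, hPh]
    rw [Matrix.conjTranspose_sub, hPCh, hCh]
    simp only [Matrix.sub_mul, Matrix.mul_sub, Matrix.trace_sub, Matrix.mul_assoc]
    rw [hPP', htr5, hC]
    ring
  have master : A.trace + B.trace - 2 * T.trace = (Xᴴ * X).trace + (Yᴴ * Y).trace := by
    rw [hXX, hYY, hTrT]
    ring
  constructor
  · intro h0
    have hsum : (Xᴴ * X).trace + (Yᴴ * Y).trace = 0 := by rw [← master]; exact h0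
    have hx := trace_ct_mul_self_nonneg X
    have hy := trace_ct_mul_self_nonneg Y
    have hX0 : X = 0 := eq_zero_of_trace_ct_mul_self_eq_zero (by linarith)
    have hY0 : Y = 0 := eq_zero_of_trace_ct_mul_self_eq_zero (by linarith)
    rw [hXdef] at hX0
    rw [hYdef] at hY0
    have hSV : S * V = C * U := sub_eq_zero.mp hX0
    have hPC : P * C = C := (sub_eq_zero.mp hY0).symm
    calc A = S * S := hS.symm
      _ = S * (V * Vᴴ) * S := by rw [hVV', Matrix.mul_one]
      _ = (S * V) * (Vᴴ * S) := by simp only [Matrix.mul_assoc]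
      _ = (C * U) * (Vᴴ * S) := by rw [hSV]
      _ = (C * U) * (S * V)ᴴ := by rw [Matrix.conjTranspose_mul, hSh]
      _ = (C * U) * (C * U)ᴴ := by rw [hSV]
      _ = C * (P * C) := by
          rw [Matrix.conjTranspose_mul, hCh, hPdef]
          simp only [Matrix.mul_assoc]
      _ = C * C := by rw [hPC]
      _ = B := hC
  · intro hABeq
    have hsq : A ^ 2 = S * B * S := by
      rw [pow_two, ← hABeq, ← hS]
      simp only [Matrix.mul_assoc]
    have hT_eq : A = T := hA.eq_sqrt_of_sq_eq hM0 hsq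
    rw [← hABeq, ← hT_eq]
    ring
end
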